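/- arXiv:2507.16678 — 3 statements merged into one kernel-verified Lean document; each statement's English description precedes it below -/
import Mathlib

section
/- The function φ(t) = (t-1)·ln(t) - 2(t-1)²/(t+1) is non-negative for all t > 0. -/
/-! φ(t) = (t - 1) · g(t) with g(t) = log t - 2(t - 1)/(t + 1). Since
g'(t) = (t - 1)² / (t (t + 1)²) ≥ 0 and g(1) = 0, g has the sign of t - 1 on (0, ∞). -/

open Real Set

lemma hasDerivAt_log_sub_two_mul_sub_one_div_add_one {x : ℝ} (hx : 0 < x) :
    HasDerivAt (fun t ↦ log t - 2 * (t - 1) / (t + 1)) ((x - 1) ^ 2 / (x * (x + 1) ^ 2)) x := by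
  have hx1 : x + 1 ≠ 0 := by positivity
  have hquot : HasDerivAt (fun t ↦ 2 * (t - 1) / (t + 1))
      ((2 * (x + 1) - 2 * (x - 1) * 1) / (x + 1) ^ 2) x :=
    (((hasDerivAt_id x).sub_const 1).const_mul 2 |>.congr_deriv (mul_one 2)).div
      ((hasDerivAt_id x).add_const 1) hx1
  refine ((hasDerivAt_log hx.ne').sub hquot).congr_deriv ?_
  field_simp
  ring

lemma monotoneOn_log_sub_two_mul_sub_one_div_add_one :
    MonotoneOn (fun t ↦ log t - 2 * (t - 1) / (t + 1)) (Ioi 0) := by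
  have hderiv (x : ℝ) (hx : x ∈ Ioi 0) := hasDerivAt_log_sub_two_mul_sub_one_div_add_one hx
  refine monotoneOn_of_hasDerivWithinAt_nonneg (f' := fun x ↦ (x - 1) ^ 2 / (x * (x + 1) ^ 2))
    (convex_Ioi 0)
    (fun x hx ↦ (hderiv x hx).continuousAt.continuousWithinAt) (fun x hx ↦ ?_) (fun x hx ↦ ?_)
  · rw [interior_Ioi] at hx ⊢
    exact (hderiv x hx).hasDerivWithinAt
  · rw [interior_Ioi] at hx
    have : 0 < x := hx
    positivity

theorem stmt_0 (t : ℝ) (ht : 0 < t) :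
    0 ≤ (t - 1) * Real.log t - 2 * (t - 1) ^ 2 / (t + 1) := by
  set g : ℝ → ℝ := fun t ↦ log t - 2 * (t - 1) / (t + 1)
  have hg1 : g 1 = 0 := by simp [g]
  have hfactor : (t - 1) * log t - 2 * (t - 1) ^ 2 / (t + 1) = (t - 1) * g t := by
    simp only [g]
    field_simp
  have hmono : MonotoneOn g (Ioi 0) := monotoneOn_log_sub_two_mul_sub_one_div_add_one
  rw [hfactor]
  rcases le_total t 1 with hle | hge
  · have hg_nonpos : g t ≤ 0 := hg1 ▸ hmono ht (mem_Ioi.2 one_pos) hle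
    exact mul_nonneg_of_nonpos_of_nonpos (by linarith) hg_nonpos
  · have hg_nonneg : 0 ≤ g t := hg1 ▸ hmono (mem_Ioi.2 one_pos) ht hge
    exact mul_nonneg (by linarith) hg_nonneg
end

section
/- For all a, b > 0, (a - b)·ln(a/b) ≥ 2(a-b)²/(a+b). -/
/-!
With `x = (a - b) / (a + b)` one has `a / b = (1 + x) / (1 - x)`, so
`log (a / b) = 2 (x + x³/3 + x⁵/5 + ⋯)`. Multiplying by `x` gives a series of even powers of `x`,
all nonnegative, whose first term is `2 x²`; multiplying back by `a + b` gives the inequality.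
-/

open Real

lemma two_mul_sq_le_mul_log_one_add_sub_log_one_sub {x : ℝ} (hx : |x| < 1) :
    2 * x ^ 2 ≤ x * (log (1 + x) - log (1 - x)) := by
  have hsum := (hasSum_log_sub_log_of_abs_lt_one hx).mul_left x
  have hterm : ∀ k : ℕ, x * (2 * (1 / (2 * k + 1)) * x ^ (2 * k + 1))
      = 2 / (2 * k + 1) * (x ^ 2) ^ (k + 1) := fun k => by ring
  simp only [hterm] at hsum
  simpa using le_hasSum hsum 0 fun k _ => by positivity

lemma log_div_eq_log_one_add_sub_log_one_sub {a b : ℝ} (ha : 0 < a) (hb : 0 < b) :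
    log (a / b) = log (1 + (a - b) / (a + b)) - log (1 - (a - b) / (a + b)) := by
  have hab : 0 < a + b := add_pos ha hb
  have h₁ : 1 + (a - b) / (a + b) = 2 * a / (a + b) := by field_simp; ring
  have h₂ : 1 - (a - b) / (a + b) = 2 * b / (a + b) := by field_simp; ring
  rw [h₁, h₂, ← log_div (by positivity) (by positivity)]
  congr 1
  field_simp

theorem stmt_1 (a b : ℝ) (ha : 0 < a) (hb : 0 < b) :
    (a - b) * Real.log (a / b) ≥ 2 * (a - b) ^ 2 / (a + b) := by
  have hab : 0 < a + b := add_pos ha hb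
  have hx : |(a - b) / (a + b)| < 1 := by
    rw [abs_div, abs_of_pos hab, div_lt_one hab, abs_lt]
    constructor <;> linarith
  have key := two_mul_sq_le_mul_log_one_add_sub_log_one_sub hx
  rw [← log_div_eq_log_one_add_sub_log_one_sub ha hb] at key
  calc 2 * (a - b) ^ 2 / (a + b) = (a + b) * (2 * ((a - b) / (a + b)) ^ 2) := by
        field_simp
    _ ≤ (a + b) * ((a - b) / (a + b) * log (a / b)) := by gcongr
    _ = (a - b) * log (a / b) := by field_simp
end

section
/- Let F, G ∈ ℝ^T be vectors in the interior of the probability simplex (all entries strictly positive, summing to 1). Then ∑_j (f_j - g_j)·ln(f_j/g_j) ≥ ∑_j 2(f_j - g_j)²/(f_j + g_j). -/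
/-!
Termwise: put `x = (f - g) / (f + g) ∈ (-1, 1)`, so that `f / g = (1 + x) / (1 - x)` and
`(f - g) log (f / g) = (f + g) · x · log ((1 + x) / (1 - x)) = (f + g) · ∑ₖ 2 x ^ (2k + 2) / (2k + 1)`.
All terms of this series are nonnegative, and its first one is `(f + g) · 2x² = 2 (f - g)² / (f + g)`.
-/

open Real

lemma two_mul_sq_div_add_le_sub_mul_log_div {f g : ℝ} (hf : 0 < f) (hg : 0 < g) :
    2 * (f - g) ^ 2 / (f + g) ≤ (f - g) * log (f / g) := by
  have hfg : 0 < f + g := add_pos hf hg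
  have hx : |(f - g) / (f + g)| < 1 := by
    rw [abs_lt, lt_div_iff₀ hfg, div_lt_iff₀ hfg]
    constructor <;> linarith
  have h_one_add : 1 + (f - g) / (f + g) = 2 * f / (f + g) := by field_simp; ring
  have h_one_sub : 1 - (f - g) / (f + g) = 2 * g / (f + g) := by field_simp; ring
  have key := two_mul_sq_le_mul_log_one_add_sub_log_one_sub hx
  rw [h_one_add, h_one_sub, ← log_div (by positivity) (by positivity)] at key
  calc 2 * (f - g) ^ 2 / (f + g) = (f + g) * (2 * ((f - g) / (f + g)) ^ 2) := by
        field_simp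
    _ ≤ (f + g) * ((f - g) / (f + g) * log (2 * f / (f + g) / (2 * g / (f + g)))) :=
        mul_le_mul_of_nonneg_left key hfg.le
    _ = (f - g) * log (f / g) := by
        field_simp

theorem stmt_2_general (T : ℕ) (F G : Fin T → ℝ)
    (hF : ∀ j, 0 < F j) (hG : ∀ j, 0 < G j) :
    ∑ j, (F j - G j) * Real.log (F j / G j) ≥
      ∑ j, 2 * (F j - G j) ^ 2 / (F j + G j) :=
  Finset.sum_le_sum fun j _ => two_mul_sq_div_add_le_sub_mul_log_div (hF j) (hG j)

theorem stmt_2 (T : ℕ) (F G : Fin T → ℝ)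
    (hF : ∀ j, 0 < F j) (hG : ∀ j, 0 < G j)
    (hFsum : ∑ j, F j = 1) (hGsum : ∑ j, G j = 1) :
    ∑ j, (F j - G j) * Real.log (F j / G j) ≥
      ∑ j, 2 * (F j - G j) ^ 2 / (F j + G j) :=
  stmt_2_general T F G hF hG
end
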